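/- arXiv:1709.05957 — 3 statements merged into one kernel-verified Lean document; each statement's English description precedes it below -/
import Mathlib

section
/- Let v : ℝ³ → ℝ³ be a C¹ vector field that is (1) divergence free, and suppose v = ∇f × ∇g for C² functions f, g : ℝ³ → ℝ and the gradients of f and g satisfy ∇g · curl v = -∂_f H(f,g) and ∇f · curl v = ∂_g H(f,g) for some C¹ function H : ℝ² → ℝ. Then v × curl v = ∇ₓ(H(f(x), g(x))), the spatial gradient of the composition H(f, g). -/
open Matrix MeasureTheory Real

noncomputable def pd (i : Fin 3) (f : (Fin 3 → ℝ) → ℝ) : (Fin 3 → ℝ) → ℝ :=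
  fun x => fderiv ℝ f x (Pi.single i 1)

noncomputable def grad (f : (Fin 3 → ℝ) → ℝ) (x : Fin 3 → ℝ) : Fin 3 → ℝ :=
  fun i => pd i f x

noncomputable def divg (v : (Fin 3 → ℝ) → (Fin 3 → ℝ)) (x : Fin 3 → ℝ) : ℝ :=
  ∑ i, pd i (fun y => v y i) x

noncomputable def curl (v : (Fin 3 → ℝ) → (Fin 3 → ℝ)) (x : Fin 3 → ℝ) : Fin 3 → ℝ :=
  ![pd 1 (fun y => v y 2) x - pd 2 (fun y => v y 1) x,
    pd 2 (fun y => v y 0) x - pd 0 (fun y => v y 2) x,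
    pd 0 (fun y => v y 1) x - pd 1 (fun y => v y 0) x]

theorem fderiv_comp_prodMk_apply {E : Type*} [NormedAddCommGroup E] [NormedSpace ℝ E]
    {f g : E → ℝ} {H : ℝ × ℝ → ℝ} {x : E} (hf : DifferentiableAt ℝ f x)
    (hg : DifferentiableAt ℝ g x) (hH : DifferentiableAt ℝ H (f x, g x)) (h : E) :
    fderiv ℝ (fun y => H (f y, g y)) x h =
      fderiv ℝ f x h * fderiv ℝ H (f x, g x) (1, 0) +
        fderiv ℝ g x h * fderiv ℝ H (f x, g x) (0, 1) := by
  have hsplit : ((fderiv ℝ f x h, fderiv ℝ g x h) : ℝ × ℝ) =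
      fderiv ℝ f x h • ((1 : ℝ), (0 : ℝ)) + fderiv ℝ g x h • ((0 : ℝ), (1 : ℝ)) := by
    simp
  rw [fderiv_fun_comp x hH (hf.prodMk hg), ContinuousLinearMap.comp_apply,
    hf.fderiv_prodMk hg, ContinuousLinearMap.prod_apply, hsplit, map_add, map_smul, map_smul,
    smul_eq_mul, smul_eq_mul]

theorem grad_comp_prodMk {f g : (Fin 3 → ℝ) → ℝ} {H : ℝ × ℝ → ℝ} {x : Fin 3 → ℝ}
    (hf : DifferentiableAt ℝ f x) (hg : DifferentiableAt ℝ g x)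
    (hH : DifferentiableAt ℝ H (f x, g x)) :
    grad (fun y => H (f y, g y)) x =
      fderiv ℝ H (f x, g x) (1, 0) • grad f x + fderiv ℝ H (f x, g x) (0, 1) • grad g x := by
  funext i
  simp only [grad, pd, fderiv_comp_prodMk_apply hf hg hH, Pi.add_apply, Pi.smul_apply,
    smul_eq_mul]
  ring

theorem stmt_6_general (v : (Fin 3 → ℝ) → (Fin 3 → ℝ)) (f g : (Fin 3 → ℝ) → ℝ) (H : ℝ × ℝ → ℝ)
    (hf : ContDiff ℝ 2 f) (hg : ContDiff ℝ 2 g) (hH : ContDiff ℝ 1 H)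
    (hrep : ∀ x, v x = crossProduct (grad f x) (grad g x))
    (h1 : ∀ x, (grad g x) ⬝ᵥ (curl v x) = -(fderiv ℝ H (f x, g x) ((1 : ℝ), (0 : ℝ))))
    (h2 : ∀ x, (grad f x) ⬝ᵥ (curl v x) = fderiv ℝ H (f x, g x) ((0 : ℝ), (1 : ℝ))) :
    ∀ x, crossProduct (v x) (curl v x) = grad (fun y => H (f y, g y)) x := by
  intro x
  rw [grad_comp_prodMk (hf.differentiable two_ne_zero x) (hg.differentiable two_ne_zero x)
    (hH.differentiable one_ne_zero _), hrep x, cross_cross_eq_smul_sub_smul, h1 x, h2 x,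
    neg_smul, sub_neg_eq_add, add_comm]

/-- If `v = ∇f × ∇g` is divergence free and `∇g · curl v = -∂_f H(f,g)`,
`∇f · curl v = ∂_g H(f,g)`, then `v × curl v = ∇ₓ(H(f,g))`. -/
theorem stmt_6 (v : (Fin 3 → ℝ) → (Fin 3 → ℝ)) (f g : (Fin 3 → ℝ) → ℝ) (H : ℝ × ℝ → ℝ)
    (hv : ContDiff ℝ 1 v) (hf : ContDiff ℝ 2 f) (hg : ContDiff ℝ 2 g) (hH : ContDiff ℝ 1 H)
    (hdiv : ∀ x, divg v x = 0)
    (hrep : ∀ x, v x = crossProduct (grad f x) (grad g x))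
    (h1 : ∀ x, (grad g x) ⬝ᵥ (curl v x) = -(fderiv ℝ H (f x, g x) ((1 : ℝ), (0 : ℝ))))
    (h2 : ∀ x, (grad f x) ⬝ᵥ (curl v x) = fderiv ℝ H (f x, g x) ((0 : ℝ), (1 : ℝ))) :
    ∀ x, crossProduct (v x) (curl v x) = grad (fun y => H (f y, g y)) x :=
  stmt_6_general v f g H hf hg hH hrep h1 h2
end

section
/- Let v : ℝ³ → ℝ³ be a C¹ vector field, f, g : ℝ³ → ℝ C² functions with v = ∇f × ∇g, and H : ℝ² → ℝ C¹. If v × curl v = ∇ₓ(H(f,g)), then v satisfies the stationary Euler equation (v·∇)v = -∇p with pressure p = -½|v|² + H(f,g). -/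
open Matrix MeasureTheory Real

/-! The vector identity `∇(½|v|²) = v × curl v + (v·∇)v` turns the hypothesis
`v × curl v = ∇(H(f,g))` into `(v·∇)v = -∇(-½|v|² + H(f,g))`. -/

section PartialDerivative

variable {i : Fin 3} {x : Fin 3 → ℝ}

theorem pd_add {f g : (Fin 3 → ℝ) → ℝ} (hf : DifferentiableAt ℝ f x)
    (hg : DifferentiableAt ℝ g x) :
    pd i (fun y => f y + g y) x = pd i f x + pd i g x := by
  simp only [pd, fderiv_fun_add hf hg, _root_.add_apply]

theorem pd_const_mul (c : ℝ) (f : (Fin 3 → ℝ) → ℝ) :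
    pd i (fun y => c * f y) x = c * pd i f x := by
  change fderiv ℝ (c • f) x (Pi.single i 1) = c * fderiv ℝ f x (Pi.single i 1)
  rw [fderiv_const_smul_field, Pi.smul_apply, _root_.smul_apply, smul_eq_mul]

theorem pd_sum_sq {v : (Fin 3 → ℝ) → (Fin 3 → ℝ)} (hv : DifferentiableAt ℝ v x) :
    pd i (fun y => ∑ k, v y k ^ 2) x = 2 * ∑ k, v x k * pd i (fun y => v y k) x := by
  have hvk : ∀ k, DifferentiableAt ℝ (fun y => v y k) x := differentiableAt_pi.mp hv
  have hsum := HasFDerivAt.fun_sum (u := Finset.univ) fun k _ => ((hvk k).hasFDerivAt.pow 2)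
  simp only [pd, hsum.fderiv, Finset.mul_sum]
  simp [mul_assoc]

theorem pd_sum_sq_eq_cross_curl_add_convective {v : (Fin 3 → ℝ) → (Fin 3 → ℝ)}
    (hv : DifferentiableAt ℝ v x) :
    pd i (fun y => ∑ k, v y k ^ 2) x =
      2 * (crossProduct (v x) (curl v x) i + ∑ j, v x j * pd j (fun y => v y i) x) := by
  rw [pd_sum_sq hv]
  fin_cases i <;> simp [curl, crossProduct, Fin.sum_univ_three] <;> ring

end PartialDerivative

theorem stmt_7_general (v : (Fin 3 → ℝ) → (Fin 3 → ℝ)) (f g : (Fin 3 → ℝ) → ℝ) (H : ℝ × ℝ → ℝ)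
    (hv : ContDiff ℝ 1 v) (hf : ContDiff ℝ 2 f) (hg : ContDiff ℝ 2 g) (hH : ContDiff ℝ 1 H)
    (hcurl : ∀ x, crossProduct (v x) (curl v x) = grad (fun y => H (f y, g y)) x) :
    ∀ x i, (∑ j, v x j * pd j (fun y => v y i) x) =
      - pd i (fun y => -(1 / 2) * (∑ k, (v y k) ^ 2) + H (f y, g y)) x := by
  intro x i
  have hvx : DifferentiableAt ℝ v x := hv.differentiable one_ne_zero x
  have hHfg : DifferentiableAt ℝ (fun y => H (f y, g y)) x :=
    (hH.differentiable one_ne_zero).comp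
      ((hf.differentiable two_ne_zero).prodMk (hg.differentiable two_ne_zero)) x
  have hsq : DifferentiableAt ℝ (fun y => -(1 / 2) * ∑ k, v y k ^ 2) x := by
    have hvk : ∀ k, DifferentiableAt ℝ (fun y => v y k) x := differentiableAt_pi.mp hvx
    fun_prop
  have hHpd : pd i (fun y => H (f y, g y)) x = crossProduct (v x) (curl v x) i := by
    rw [hcurl x, grad]
  rw [pd_add hsq hHfg, pd_const_mul, pd_sum_sq_eq_cross_curl_add_convective hvx, hHpd]
  ring

/-- If `v = ∇f × ∇g` and `v × curl v = ∇ₓ(H(f,g))`, then `v` satisfies the stationary Euler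
equation `(v·∇)v = -∇p` with `p = -½|v|² + H(f,g)`. -/
theorem stmt_7 (v : (Fin 3 → ℝ) → (Fin 3 → ℝ)) (f g : (Fin 3 → ℝ) → ℝ) (H : ℝ × ℝ → ℝ)
    (hv : ContDiff ℝ 1 v) (hf : ContDiff ℝ 2 f) (hg : ContDiff ℝ 2 g) (hH : ContDiff ℝ 1 H)
    (hrep : ∀ x, v x = crossProduct (grad f x) (grad g x))
    (hcurl : ∀ x, crossProduct (v x) (curl v x) = grad (fun y => H (f y, g y)) x) :
    ∀ x i, (∑ j, v x j * pd j (fun y => v y i) x) =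
      - pd i (fun y => -(1 / 2) * (∑ k, (v y k) ^ 2) + H (f y, g y)) x :=
  stmt_7_general v f g H hv hf hg hH hcurl
end

section
/- Let Φ : ℝ² → ℝ² be C¹ with det Φ'(p) = 1 for all p, and suppose Φ = T + Φ₀ where T is linear and Φ₀ is periodic with respect to a lattice of full rank in ℝ². Then T is bijective. -/
/-!
If `T` were not surjective, a nonzero functional `ℓ` would vanish on its range, so `ℓ ∘ Φ = ℓ ∘ Φ₀`
would be continuous and periodic under a lattice of full rank. Such a function has compact range,
hence a global maximum, which is a critical point: `ℓ ∘ Φ'(p) = 0`. Since `det Φ'(p) = 1`, `Φ'(p)`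
is onto, so `ℓ = 0`. A surjective endomorphism of `ℝ²` is bijective.
-/

open Function Submodule

theorem Function.Periodic.of_mem_span_int {E β : Type*} [AddCommGroup E] {f : E → β}
    {S : Set E} (h : ∀ c ∈ S, Periodic f c) {v : E} (hv : v ∈ span ℤ S) : Periodic f v := by
  induction hv using span_induction with
  | mem c hc => exact h c hc
  | zero => exact periodic_with_period_zero f
  | add _ _ _ _ h₁ h₂ => exact h₁.add_period h₂
  | smul n _ _ h => exact h.zsmul n

section Periodic

variable {E ι : Type*} [NormedAddCommGroup E] [NormedSpace ℝ E] [FiniteDimensional ℝ E]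
  [Finite ι] (b : Module.Basis ι ℝ E)

theorem Continuous.exists_forall_le_of_periodic {f : E → ℝ} (hf : Continuous f)
    (hper : ∀ i, Periodic f (b i)) : ∃ p₀, ∀ p, f p ≤ f p₀ := by
  have hL : ∀ z w, w ∈ span ℤ (Set.range b) → f (z + w) = f z := fun z _ hw =>
    Periodic.of_mem_span_int (by rintro _ ⟨i, rfl⟩; exact hper i) hw z
  obtain ⟨_, ⟨p₀, rfl⟩, hmax⟩ :=
    (IsZLattice.isCompact_range_of_periodic _ f hf hL).exists_isGreatest (Set.range_nonempty f)
  exact ⟨p₀, fun p => hmax ⟨p, rfl⟩⟩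

theorem Differentiable.exists_fderiv_eq_zero_of_periodic {f : E → ℝ} (hf : Differentiable ℝ f)
    (hper : ∀ i, Periodic f (b i)) : ∃ p, fderiv ℝ f p = 0 := by
  obtain ⟨p₀, hp₀⟩ := hf.continuous.exists_forall_le_of_periodic b hper
  exact ⟨p₀, IsLocalMax.fderiv_eq_zero (Filter.Eventually.of_forall hp₀)⟩

theorem LinearMap.surjective_of_surjective_fderiv_add_periodic {F : Type*} [NormedAddCommGroup F]
    [NormedSpace ℝ F] [FiniteDimensional ℝ F] {Φ Φ₀ : E → F} {T : E →ₗ[ℝ] F}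
    (hΦ : Differentiable ℝ Φ) (hΦ' : ∀ p, Surjective (fderiv ℝ Φ p))
    (hsum : ∀ p, Φ p = T p + Φ₀ p) (hper : ∀ i, Periodic Φ₀ (b i)) : Surjective T := by
  refine dualMap_injective_iff.1 <| (injective_iff_map_eq_zero _).2 fun ℓ hℓ => ?_
  have hℓT (x : E) : ℓ (T x) = 0 := LinearMap.congr_fun hℓ x
  let ℓc := LinearMap.toContinuousLinearMap ℓ
  have hperℓ (i : ι) : Periodic (ℓc ∘ Φ) (b i) := fun p => by
    simp [ℓc, hsum, hℓT, hper i p]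
  obtain ⟨p, hp⟩ := (ℓc.differentiable.comp hΦ).exists_fderiv_eq_zero_of_periodic b hperℓ
  rw [fderiv_comp p ℓc.differentiableAt (hΦ p), ℓc.fderiv] at hp
  ext y
  obtain ⟨v, rfl⟩ := hΦ' p y
  exact congr($hp v)

end Periodic

/-- If `Φ = T + Φ₀` is `C¹` with `det Φ' = 1` everywhere, `T` linear and `Φ₀` periodic with
respect to a full-rank lattice, then `T` is bijective. -/
theorem stmt_16 (Φ Φ₀ : (Fin 2 → ℝ) → (Fin 2 → ℝ)) (T : (Fin 2 → ℝ) →ₗ[ℝ] (Fin 2 → ℝ))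
    (hΦ : ContDiff ℝ 1 Φ)
    (hdet : ∀ p, LinearMap.det ((fderiv ℝ Φ p).toLinearMap) = 1)
    (ω₁ ω₂ : Fin 2 → ℝ) (hω : LinearIndependent ℝ ![ω₁, ω₂])
    (hsum : ∀ p, Φ p = T p + Φ₀ p)
    (hper1 : ∀ p, Φ₀ (p + ω₁) = Φ₀ p) (hper2 : ∀ p, Φ₀ (p + ω₂) = Φ₀ p) :
    Function.Bijective T := by
  let B := basisOfLinearIndependentOfCardEqFinrank hω (by simp)
  have hper (i : Fin 2) : Periodic Φ₀ (B i) := by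
    rw [coe_basisOfLinearIndependentOfCardEqFinrank]
    fin_cases i
    exacts [hper1, hper2]
  have hΦ' (p) : Surjective (fderiv ℝ Φ p) :=
    ((fderiv ℝ Φ p).toLinearMap.equivOfDetNeZero (by simp [hdet p])).surjective
  have hT : Surjective T :=
    T.surjective_of_surjective_fderiv_add_periodic B (hΦ.differentiable one_ne_zero) hΦ' hsum hper
  exact ⟨LinearMap.injective_iff_surjective.2 hT, hT⟩
end
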